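/- arXiv:2203.10132 — 2 statements merged into one kernel-verified Lean document; each statement's English description precedes it below -/
import Mathlib

section
/- Let (X,d) be a locally uniformly extendible CAT(0) space. A convex function f : X → ℝ is continuous if and only if it is locally bounded above. -/
/-- A geodesic segment from `a` to `b`, parametrized by arclength on `[0, dist a b]`. -/
def IsGeodesicSegment {X : Type*} [MetricSpace X] (γ : ℝ → X) (a b : X) : Prop :=
  γ 0 = a ∧ γ (dist a b) = b ∧
    ∀ s ∈ Set.Icc (0 : ℝ) (dist a b), ∀ t ∈ Set.Icc (0 : ℝ) (dist a b),
      dist (γ s) (γ t) = |s - t|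

/-- A geodesic metric space: any two points are joined by a geodesic segment. -/
def GeodesicSpace (X : Type*) [MetricSpace X] : Prop :=
  ∀ a b : X, ∃ γ : ℝ → X, IsGeodesicSegment γ a b

/-- A CAT(0) space: a geodesic metric space satisfying the CN comparison inequality
(for geodesic spaces this is equivalent to the CAT(0) comparison inequality). -/
def IsCAT0 (X : Type*) [MetricSpace X] : Prop :=
  GeodesicSpace X ∧
    ∀ (a b : X) (γ : ℝ → X), IsGeodesicSegment γ a b →
      ∀ p : X, ∀ t ∈ Set.Icc (0 : ℝ) 1,
        dist p (γ (t * dist a b)) ^ 2 ≤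
          (1 - t) * dist p a ^ 2 + t * dist p b ^ 2 - t * (1 - t) * dist a b ^ 2

/-- A convex function on a metric space: its restriction to every geodesic segment,
parametrized by arclength, is convex. -/
def IsConvexFun {X : Type*} [MetricSpace X] (f : X → ℝ) : Prop :=
  ∀ (a b : X) (γ : ℝ → X), IsGeodesicSegment γ a b →
    ConvexOn ℝ (Set.Icc (0 : ℝ) (dist a b)) (f ∘ γ)

/-- A geodesic metric space is locally uniformly extendible if for every `x` there is
`δ > 0` such that for every `y` there is a geodesic segment `[a,b]` containing a
geodesic segment `[x,y]` with `d(a,x) ≥ δ` and `d(b,y) ≥ δ`. -/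
def LocallyUniformlyExtendible (X : Type*) [MetricSpace X] : Prop :=
  ∀ x : X, ∃ δ > (0 : ℝ), ∀ y : X, ∃ (a b : X) (γ : ℝ → X),
    IsGeodesicSegment γ a b ∧
      ∃ s ∈ Set.Icc (0 : ℝ) (dist a b), ∃ t ∈ Set.Icc (0 : ℝ) (dist a b),
        s ≤ t ∧ γ s = x ∧ γ t = y ∧ δ ≤ dist a x ∧ δ ≤ dist b y

/-- `f` is locally bounded above: every point has a neighborhood on which `f` is
bounded above. -/
def LocallyBoundedAbove {X : Type*} [TopologicalSpace X] (f : X → ℝ) : Prop :=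
  ∀ x : X, ∃ U ∈ nhds x, BddAbove (f '' U)

set_option maxHeartbeats 1000000

/-- on a locally uniformly extendible CAT(0) space, a convex function
is continuous if and only if it is locally bounded above. -/
theorem stmt1 {X : Type*} [MetricSpace X] (hX : IsCAT0 X)
    (hext : LocallyUniformlyExtendible X)
    (f : X → ℝ) (hf : IsConvexFun f) :
    Continuous f ↔ LocallyBoundedAbove f := by
  clear hX
  constructor
  · intro hc x
    refine ⟨f ⁻¹' Set.Iio (f x + 1),
      (isOpen_Iio.preimage hc).mem_nhds (by simp), f x + 1, ?_⟩
    rintro v ⟨u, hu, rfl⟩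
    exact le_of_lt hu
  · intro hb
    rw [continuous_iff_continuousAt]
    intro x
    obtain ⟨U, hU, M, hM⟩ := hb x
    obtain ⟨r, hr, hrU⟩ := Metric.mem_nhds_iff.mp hU
    obtain ⟨δ, hδ, hext'⟩ := hext x
    set ρ := min δ (r / 4) with hρdef
    have hρ : 0 < ρ := lt_min hδ (by linarith)
    have hρδ : ρ ≤ δ := min_le_left _ _
    have hρr : ρ ≤ r / 4 := min_le_right _ _
    have hMx : f x ≤ M := hM ⟨x, hrU (Metric.mem_ball_self hr), rfl⟩
    have key : ∀ y : X, dist x y < ρ →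
        |f y - f x| ≤ dist x y / ρ * (M - f x) := by
      intro y hy
      obtain ⟨a, b, γ, hγ, s, hs, t, ht, hst, hγs, hγt, hax, hby⟩ := hext' y
      obtain ⟨hγ0, hγL, hγd⟩ := hγ
      set L := dist a b with hLdef
      have hL0 : (0:ℝ) ≤ L := dist_nonneg
      have h0mem : (0:ℝ) ∈ Set.Icc (0:ℝ) L := ⟨le_refl 0, hL0⟩
      have hLmem : L ∈ Set.Icc (0:ℝ) L := ⟨hL0, le_refl _⟩
      set d := dist x y with hddef
      have hd0 : (0:ℝ) ≤ d := dist_nonneg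
      -- s ≥ δ
      have hsδ : δ ≤ s := by
        have h1 := hγd 0 h0mem s hs
        rw [hγ0, hγs, zero_sub, abs_neg, abs_of_nonneg hs.1] at h1
        rw [h1] at hax
        exact hax
      -- L - t ≥ δ
      have htδ : δ ≤ L - t := by
        have h1 := hγd L hLmem t ht
        rw [hγL, hγt, abs_of_nonneg (by linarith [ht.2])] at h1
        rw [h1] at hby
        exact hby
      -- d = t - s
      have hdts : d = t - s := by
        have h1 := hγd s hs t ht
        rw [hγs, hγt, abs_sub_comm, abs_of_nonneg (by linarith)] at h1
        exact h1
      have hmem1 : s - ρ ∈ Set.Icc (0:ℝ) L := ⟨by linarith, by linarith [hs.2]⟩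
      have hmem2 : t + ρ ∈ Set.Icc (0:ℝ) L := ⟨by linarith [ht.1], by linarith⟩
      -- bounds on f at the extended points
      have hz1 : f (γ (s - ρ)) ≤ M := by
        refine hM ⟨_, hrU ?_, rfl⟩
        have h1 := hγd (s - ρ) hmem1 s hs
        rw [hγs] at h1
        have : dist (γ (s - ρ)) x = ρ := by
          rw [h1]
          rw [show s - ρ - s = -ρ by ring, abs_neg, abs_of_nonneg hρ.le]
        rw [Metric.mem_ball, this]
        linarith
      have hz2 : f (γ (t + ρ)) ≤ M := by
        refine hM ⟨_, hrU ?_, rfl⟩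
        have h1 := hγd (t + ρ) hmem2 s hs
        rw [hγs] at h1
        have : dist (γ (t + ρ)) x = d + ρ := by
          rw [h1, abs_of_nonneg (by linarith)]
          linarith
        rw [Metric.mem_ball, this]
        linarith
      have cv := (hf a b γ ⟨hγ0, hγL, hγd⟩).2
      have hdρ : (0:ℝ) < d + ρ := by linarith
      -- upper estimate
      have h1 := cv hs hmem2 (div_nonneg hρ.le hdρ.le) (div_nonneg hd0 hdρ.le)
        (by rw [← add_div, add_comm ρ d, div_self hdρ.ne'])
      have harg1 : (ρ / (d + ρ)) • s + (d / (d + ρ)) • (t + ρ) = t := by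
        rw [smul_eq_mul, smul_eq_mul]
        field_simp
        nlinarith [hdts]
      rw [harg1] at h1
      simp only [Function.comp_apply, smul_eq_mul, hγs, hγt] at h1
      have h1' : (d + ρ) * f y ≤ ρ * f x + d * f (γ (t + ρ)) := by
        rw [div_mul_eq_mul_div, div_mul_eq_mul_div, ← add_div,
          le_div_iff₀ hdρ] at h1
        nlinarith [h1]
      -- lower estimate
      have h2 := cv hmem1 ht (div_nonneg hd0 hdρ.le) (div_nonneg hρ.le hdρ.le)
        (by rw [← add_div, div_self hdρ.ne'])
      have harg2 : (d / (d + ρ)) • (s - ρ) + (ρ / (d + ρ)) • t = s := by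
        rw [smul_eq_mul, smul_eq_mul]
        field_simp
        nlinarith [hdts]
      rw [harg2] at h2
      simp only [Function.comp_apply, smul_eq_mul, hγs, hγt] at h2
      have h2' : (d + ρ) * f x ≤ d * f (γ (s - ρ)) + ρ * f y := by
        rw [div_mul_eq_mul_div, div_mul_eq_mul_div, ← add_div,
          le_div_iff₀ hdρ] at h2
        nlinarith [h2]
      rw [abs_sub_le_iff]
      constructor
      · rw [div_mul_eq_mul_div, le_div_iff₀ hρ]
        rcases le_total (f y) (f x) with h | h
        · nlinarith
        · nlinarith [mul_nonneg hd0 (sub_nonneg.2 h)]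
      · rw [div_mul_eq_mul_div, le_div_iff₀ hρ]
        nlinarith [mul_nonneg hd0 (sub_nonneg.2 hz1)]
    rw [Metric.continuousAt_iff]
    intro ε hε
    have hC1 : (0:ℝ) < M - f x + 1 := by linarith
    refine ⟨min ρ (ρ * ε / (M - f x + 1)), lt_min hρ (by positivity), ?_⟩
    intro y hy
    have hxy : dist x y < ρ := by
      rw [dist_comm]
      exact lt_of_lt_of_le hy (min_le_left _ _)
    have hxy2 : dist x y < ρ * ε / (M - f x + 1) :=
      lt_of_lt_of_le (by rw [dist_comm]; exact hy) (min_le_right _ _)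
    have hk := key y hxy
    rw [Real.dist_eq]
    calc |f y - f x| ≤ dist x y / ρ * (M - f x) := hk
      _ ≤ dist x y / ρ * (M - f x + 1) := by
          have : (0:ℝ) ≤ dist x y / ρ := div_nonneg dist_nonneg hρ.le
          nlinarith
      _ < ε := by
          rw [div_mul_eq_mul_div, div_lt_iff₀ hρ]
          rw [lt_div_iff₀ hC1] at hxy2
          nlinarith [hxy2]
end

section
/- Let Δ be a spherical building and Σ an apartment of Δ. Suppose the thickness of Δ (the minimal number of chambers containing any panel) is strictly larger than the number of chambers of Σ. Then there exists a chamber C of Δ such that every chamber of Σ is opposite to C (i.e. Σ ⊆ Opp_Δ(C)). -/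
/-- An abstract encoding of the chamber–panel structure of a spherical building `Δ`
together with its gallery distance.  `Cham` is the set of chambers, `Panel` the set
of panels, `mem c p` says that the panel `p` is a face of the chamber `c`,
`dist` is the gallery distance and `N` the diameter of `Δ` (so two chambers are
*opposite* iff their gallery distance is `N`), and `proj p d = pr_p(d)` is the
projection (gate) of the chamber `d` to the star of the panel `p`. -/
structure SphericalBuildingChambers where
  Cham : Type
  Panel : Type
  mem : Cham → Panel → Prop
  dist : Cham → Cham → ℕ
  N : ℕ
  dist_self : ∀ c, dist c c = 0
  dist_comm : ∀ c d, dist c d = dist d c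
  eq_of_dist_eq_zero : ∀ c d, dist c d = 0 → c = d
  dist_le : ∀ c d, dist c d ≤ N
  proj : Panel → Cham → Cham
  proj_mem : ∀ p d, mem (proj p d) p
  /-- the gate property: `dist(d, c) = dist(d, pr_p(d)) + dist(pr_p(d), c)`
  for every chamber `c` in the star of `p`. -/
  gate : ∀ p d c, mem c p → dist d c = dist d (proj p d) + dist (proj p d) c
  /-- two chambers in the star of a common panel are at gallery distance `≤ 1`. -/
  star_dist : ∀ p c c', mem c p → mem c' p → dist c c' ≤ 1
  /-- a chamber `d` is *not* opposite `c` iff `pr_p(d) = c` for some panel `p` of `c`. -/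
  notOpp_iff : ∀ c d, dist c d < N ↔ ∃ p, mem c p ∧ proj p d = c

/-- let `Δ` be a spherical building and `Σ` an apartment of `Δ`
(its chamber set `Ap` is a nonempty finite set of chambers).  If the thickness `t`
of `Δ` (every panel is contained in at least `t` chambers) is strictly larger than
the number of chambers of `Σ`, then there is a chamber `C` of `Δ` opposite to every
chamber of `Σ`, i.e. `Σ ⊆ Opp_Δ(C)`. -/
theorem stmt15 (B : SphericalBuildingChambers) (t : ℕ)
    (hthick : ∀ p : B.Panel, ∃ f : Fin t → B.Cham,
        Function.Injective f ∧ ∀ i, B.mem (f i) p)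
    (Ap : Finset B.Cham) (hne : Ap.Nonempty) (hcard : Ap.card < t) :
    ∃ C : B.Cham, ∀ D ∈ Ap, B.dist C D = B.N := by
  classical
  set S : Set ℕ := Set.range (fun C => ∑ E ∈ Ap, B.dist C E) with hS
  obtain ⟨D0, hD0⟩ := hne
  have hSne : S.Nonempty := ⟨_, ⟨D0, rfl⟩⟩
  have hbdd : BddAbove S := by
    refine ⟨B.N * Ap.card, ?_⟩
    rintro x ⟨C, rfl⟩
    calc ∑ E ∈ Ap, B.dist C E ≤ ∑ _E ∈ Ap, B.N :=
          Finset.sum_le_sum (fun E _ => B.dist_le C E)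
      _ = B.N * Ap.card := by rw [Finset.sum_const, smul_eq_mul, mul_comm]
  obtain ⟨C, hC⟩ := Nat.sSup_mem hSne hbdd
  refine ⟨C, fun D hD => ?_⟩
  by_contra h
  have hlt : B.dist C D < B.N := lt_of_le_of_ne (B.dist_le C D) h
  obtain ⟨p, hmem, hproj⟩ := (B.notOpp_iff C D).1 hlt
  obtain ⟨f, hfinj, hfmem⟩ := hthick p
  have hex : ∃ i, f i ∉ Ap.image (B.proj p) := by
    by_contra hall
    push_neg at hall
    have h1 := Finset.card_le_card_of_injOn
      (s := (Finset.univ : Finset (Fin t))) f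
      (fun i _ => hall i) (hfinj.injOn)
    have h2 := Finset.card_image_le (s := Ap) (f := B.proj p)
    simp only [Finset.card_univ, Fintype.card_fin] at h1
    omega
  obtain ⟨i, hi⟩ := hex
  set C' := f i with hC'def
  have hC'mem : B.mem C' p := hfmem i
  have hkey : ∀ E ∈ Ap, B.dist C E ≤ B.dist C' E := by
    intro E hE
    have hne' : B.proj p E ≠ C' := fun he => hi (Finset.mem_image.2 ⟨E, hE, he⟩)
    have h1 : B.dist E C' = B.dist E (B.proj p E) + B.dist (B.proj p E) C' :=
      B.gate p E C' hC'mem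
    have h2 : B.dist E C = B.dist E (B.proj p E) + B.dist (B.proj p E) C :=
      B.gate p E C hmem
    have h3 : B.dist (B.proj p E) C ≤ 1 := B.star_dist p _ _ (B.proj_mem p E) hmem
    have h4 : 1 ≤ B.dist (B.proj p E) C' := by
      rcases Nat.eq_zero_or_pos (B.dist (B.proj p E) C') with h0 | h0
      · exact absurd (B.eq_of_dist_eq_zero _ _ h0) hne'
      · exact h0
    rw [B.dist_comm C E, B.dist_comm C' E, h1, h2]
    omega
  have hstrict : B.dist C D < B.dist C' D := by
    have hCC' : C ≠ C' := by
      intro he; apply hi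
      exact Finset.mem_image.2 ⟨D, hD, by rw [hproj, he]⟩
    have h1 : B.dist D C' = B.dist D (B.proj p D) + B.dist (B.proj p D) C' :=
      B.gate p D C' hC'mem
    rw [hproj] at h1
    have h4 : 1 ≤ B.dist C C' := by
      rcases Nat.eq_zero_or_pos (B.dist C C') with h0 | h0
      · exact absurd (B.eq_of_dist_eq_zero _ _ h0) hCC'
      · exact h0
    rw [B.dist_comm C D, B.dist_comm C' D]
    omega
  have hsum : ∑ E ∈ Ap, B.dist C E < ∑ E ∈ Ap, B.dist C' E :=
    Finset.sum_lt_sum (fun E hE => hkey E hE) ⟨D, hD, hstrict⟩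
  have hle : ∑ E ∈ Ap, B.dist C' E ≤ sSup S := le_csSup hbdd ⟨C', rfl⟩
  simp only at hC
  omega
end
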